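/- (Positivity of the twisted angular operator) The operator P(ξ) + ξ² − 2mξΞ is non-negative on the e^{imφ} sector: for every f in H¹(S²) of the form f(θ,φ)=g(θ)e^{imφ}, ∫_{S²} ((P(ξ)+ξ²−2mξΞ)f)·f̄ sinθ dθ dφ ≥ 0. -/

import Mathlib

/-- Δ_θ = 1 − (a²/l²) cos²θ. -/
noncomputable def Dth (a l θ : ℝ) : ℝ := 1 - (a^2/l^2) * (Real.cos θ)^2

/-- Ξ = 1 − a²/l². -/
noncomputable def Xi (a l : ℝ) : ℝ := 1 - a^2/l^2

/-- The operator P(ξ) acting on the azimuthal sector `e^{imφ}`: for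
`f(θ,φ) = g(θ) e^{imφ}` one has `∂_φ f = i m f`, and
`−P(ξ)f = (1/sinθ)∂_θ(Δ_θ sinθ ∂_θ f) + (Ξ²/(Δ_θ sin²θ))∂²_φ f
  + Ξ(ξ²/Δ_θ)cos²θ f − 2iξ(Ξ/Δ_θ)(a²/l²)cos²θ ∂_φ f`. -/
noncomputable def Pop (a l ξ : ℝ) (m : ℤ) (g : ℝ → ℂ) (θ : ℝ) : ℂ :=
  -( (((Real.sin θ)⁻¹ : ℝ) : ℂ)
        * deriv (fun t : ℝ => ((Dth a l t * Real.sin t : ℝ) : ℂ) * deriv g t) θ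
     + (((Xi a l)^2 / (Dth a l θ * (Real.sin θ)^2) : ℝ) : ℂ)
        * (Complex.I * (m : ℂ))^2 * g θ
     + ((Xi a l * ξ^2 * (Real.cos θ)^2 / Dth a l θ : ℝ) : ℂ) * g θ
     - 2 * Complex.I * (ξ : ℂ)
        * ((Xi a l / Dth a l θ * (a^2/l^2) * (Real.cos θ)^2 : ℝ) : ℂ)
        * (Complex.I * (m : ℂ)) * g θ )

lemma real_coeff (k s ξ mr : ℝ) (hs : s ≠ 0) (hΔ : 1 - k*(1-s^2) ≠ 0) :
    -((1-k)^2/((1-k*(1-s^2))*s^2) * (-(mr^2))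
      + (1-k)*ξ^2*(1-s^2)/(1-k*(1-s^2))
      + 2*ξ*mr*((1-k)/(1-k*(1-s^2))*k*(1-s^2)))
    + (ξ^2 - 2*mr*ξ*(1-k))
    = (ξ*s - mr*(1-k)/s)^2/(1-k*(1-s^2)) := by
  field_simp
  ring

set_option maxHeartbeats 1000000 in
lemma pointwise (a l ξ : ℝ) (m : ℤ) (g : ℝ → ℂ) (t : ℝ)
    (hs : Real.sin t ≠ 0) (hΔ : Dth a l t ≠ 0) :
    (Pop a l ξ m g t + ((ξ^2 - 2*(m:ℝ)*ξ*Xi a l : ℝ) : ℂ) * g t)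
      * (starRingEnd ℂ) (g t) * ((Real.sin t : ℝ) : ℂ)
    = -(deriv (fun s : ℝ => ((Dth a l s * Real.sin s : ℝ) : ℂ) * deriv g s) t)
        * (starRingEnd ℂ) (g t)
      + (((ξ * Real.sin t - (m:ℝ) * Xi a l / Real.sin t)^2 / Dth a l t
            * Real.sin t : ℝ) : ℂ) * (g t * (starRingEnd ℂ) (g t)) := by
  have hIsq : (Complex.I * (m:ℂ))^2 = -((m:ℂ)^2) := by
    rw [mul_pow, Complex.I_sq]; ring
  have hII : ∀ x y z w : ℂ, 2 * Complex.I * x * y * (Complex.I * z) * w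
      = -(2*x*y*z*w) := by
    intro x y z w
    rw [show (2:ℂ)*Complex.I*x*y*(Complex.I*z)*w
        = (Complex.I*Complex.I)*(2*x*y*z*w) by ring, Complex.I_mul_I]; ring
  simp only [Pop]
  generalize deriv (fun t : ℝ => ((Dth a l t * Real.sin t : ℝ) : ℂ) * deriv g t) t = D
  generalize (starRingEnd ℂ) (g t) = Gc
  generalize g t = G
  simp only [Dth, Xi, hIsq, hII, Real.cos_sq']
  generalize hsg : Real.sin t = s at hs hΔ ⊢
  simp only [Dth, Real.cos_sq', hsg] at hΔ
  generalize hkg : a^2/l^2 = k at hΔ ⊢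
  have hΔ' : (1:ℝ) - k * (1 - s^2) ≠ 0 := hΔ
  have hre := real_coeff k s ξ (m:ℝ) hs hΔ'
  have hreC := congrArg (Complex.ofReal) hre
  push_cast at hreC ⊢
  have hss : (s:ℂ) * (↑s)⁻¹ = 1 :=
    mul_inv_cancel₀ (Complex.ofReal_ne_zero.mpr hs)
  linear_combination (-(D*Gc)) * hss + (G*Gc*(s:ℂ)) * hreC


/-- the twisted angular operator P(ξ) + ξ² − 2mξΞ is
non-negative on the e^{imφ} sector: the quadratic form
∫ ((P(ξ)+ξ²−2mξΞ)f)·f̄ sinθ dθdφ is ≥ 0 (here the φ integral contributes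
only a factor 2π, so we state it for the θ integral). -/
theorem stmt_9 (a l ξ : ℝ) (m : ℤ) (hl : 0 < l) (ha : |a| < l)
    (g : ℝ → ℂ) (hg : ContDiff ℝ (⊤ : ℕ∞) g)
    (hL2 : MeasureTheory.IntegrableOn
      (fun θ : ℝ => ‖g θ‖^2 * Real.sin θ) (Set.Ioo 0 Real.pi))
    (hH1 : MeasureTheory.IntegrableOn
      (fun θ : ℝ => ‖deriv g θ‖^2 * Real.sin θ) (Set.Ioo 0 Real.pi))
    (hInt : MeasureTheory.IntegrableOn
      (fun θ : ℝ =>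
        (Pop a l ξ m g θ + ((ξ^2 - 2*(m:ℝ)*ξ*Xi a l : ℝ) : ℂ) * g θ)
          * (starRingEnd ℂ) (g θ) * ((Real.sin θ : ℝ) : ℂ))
      (Set.Ioo 0 Real.pi)) :
    0 ≤ (∫ θ in Set.Ioo (0:ℝ) Real.pi,
        (Pop a l ξ m g θ + ((ξ^2 - 2*(m:ℝ)*ξ*Xi a l : ℝ) : ℂ) * g θ)
          * (starRingEnd ℂ) (g θ) * ((Real.sin θ : ℝ) : ℂ)).re := by
  classical
  open MeasureTheory Set intervalIntegral in
  -- basic positivity facts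
  have hl0 : l ≠ 0 := ne_of_gt hl
  have ha2 : a^2 < l^2 := by
    have h := abs_lt.mp ha
    nlinarith [h.1, h.2]
  have hk0 : 0 ≤ a^2/l^2 := by positivity
  have hk1 : a^2/l^2 < 1 := (div_lt_one (by positivity)).mpr ha2
  have hΔpos : ∀ t : ℝ, 0 < Dth a l t := by
    intro t
    have h1 : (Real.cos t)^2 ≤ 1 := Real.cos_sq_le_one t
    have h2 : 0 ≤ (Real.cos t)^2 := sq_nonneg _
    unfold Dth
    nlinarith
  -- smoothness of g and its derivative
  have hg1 : ContDiff ℝ ((⊤:ℕ∞) : WithTop ℕ∞) g := hg.of_le (mod_cast le_top)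
  have hgd : ContDiff ℝ ((⊤:ℕ∞) : WithTop ℕ∞) (deriv g) :=
    (contDiff_infty_iff_deriv.mp hg1).2
  have hgdiff : Differentiable ℝ g := (contDiff_infty_iff_deriv.mp hg1).1
  -- the function u = Δ sinθ g'
  set u : ℝ → ℂ := fun t : ℝ => ((Dth a l t * Real.sin t : ℝ) : ℂ) * deriv g t
    with hu_def
  have hDs : ContDiff ℝ ((⊤:ℕ∞) : WithTop ℕ∞)
      (fun t : ℝ => (Dth a l t * Real.sin t : ℝ)) := by
    unfold Dth
    exact ((contDiff_const.sub (contDiff_const.mul (Real.contDiff_cos.pow 2))).mul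
      Real.contDiff_sin)
  have hu_cd : ContDiff ℝ ((⊤:ℕ∞) : WithTop ℕ∞) u :=
    (Complex.ofRealCLM.contDiff.comp hDs).mul hgd
  have hu_diff : Differentiable ℝ u :=
    hu_cd.differentiable (by simp)
  have hu'cont : Continuous (deriv u) :=
    ((contDiff_infty_iff_deriv.mp hu_cd).2).continuous
  have hu' : ∀ x : ℝ, HasDerivAt u (deriv u x) x :=
    fun x => (hu_diff x).hasDerivAt
  have hconjg : ∀ x : ℝ, HasDerivAt (fun s : ℝ => (starRingEnd ℂ) (g s))
      ((starRingEnd ℂ) (deriv g x)) x :=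
    fun x => ((hgdiff x).hasDerivAt).star
  have hcontg : Continuous g := hg1.continuous
  have hcontgd : Continuous (deriv g) := hgd.continuous
  have hcont_conjg : Continuous (fun s : ℝ => (starRingEnd ℂ) (g s)) :=
    hcontg.star
  have hcont_conjgd : Continuous (fun s : ℝ => (starRingEnd ℂ) (deriv g s)) :=
    hcontgd.star
  -- boundary vanishing
  have hu0 : u 0 = 0 := by simp [hu_def, Real.sin_zero]
  have huπ : u Real.pi = 0 := by simp [hu_def, Real.sin_pi]
  -- integration by parts
  have hI1 : IntervalIntegrable (fun x => deriv u x * (starRingEnd ℂ) (g x))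
      volume 0 Real.pi := (hu'cont.mul hcont_conjg).intervalIntegrable _ _
  have hI2 : IntervalIntegrable (fun x => u x * (starRingEnd ℂ) (deriv g x))
      volume 0 Real.pi := ((hu_cd.continuous).mul hcont_conjgd).intervalIntegrable _ _
  have hibp : (∫ x in (0:ℝ)..Real.pi, deriv u x * (starRingEnd ℂ) (g x))
      = - ∫ x in (0:ℝ)..Real.pi, u x * (starRingEnd ℂ) (deriv g x) := by
    have h := intervalIntegral.integral_deriv_mul_eq_sub
      (a := (0:ℝ)) (b := Real.pi)
      (u := u) (v := fun s : ℝ => (starRingEnd ℂ) (g s))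
      (u' := deriv u) (v' := fun s : ℝ => (starRingEnd ℂ) (deriv g s))
      (fun x _ => hu' x) (fun x _ => hconjg x)
      ((hu'cont).intervalIntegrable _ _) (hcont_conjgd.intervalIntegrable _ _)
    rw [intervalIntegral.integral_add hI1 hI2, hu0, huπ] at h
    simp at h
    linear_combination h
  -- the potential W
  set W : ℝ → ℝ := fun t =>
    (ξ * Real.sin t - (m:ℝ) * Xi a l / Real.sin t)^2 / Dth a l t * Real.sin t
    with hW_def
  -- pointwise identity on Ioo
  have hEq : Set.EqOn
      (fun θ : ℝ =>
        (Pop a l ξ m g θ + ((ξ^2 - 2*(m:ℝ)*ξ*Xi a l : ℝ) : ℂ) * g θ)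
          * (starRingEnd ℂ) (g θ) * ((Real.sin θ : ℝ) : ℂ))
      (fun θ : ℝ => -(deriv u θ) * (starRingEnd ℂ) (g θ)
        + ((W θ : ℝ) : ℂ) * (g θ * (starRingEnd ℂ) (g θ)))
      (Set.Ioo 0 Real.pi) := by
    intro t ht
    have hs : Real.sin t ≠ 0 :=
      ne_of_gt (Real.sin_pos_of_pos_of_lt_pi ht.1 ht.2)
    exact pointwise a l ξ m g t hs (ne_of_gt (hΔpos t))
  -- integrability of pieces
  have h1int : MeasureTheory.IntegrableOn
      (fun θ : ℝ => -(deriv u θ) * (starRingEnd ℂ) (g θ)) (Set.Ioo 0 Real.pi) :=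
    (((hu'cont.neg.mul hcont_conjg).continuousOn).integrableOn_Icc).mono_set
      Set.Ioo_subset_Icc_self
  have h2int : MeasureTheory.IntegrableOn
      (fun θ : ℝ => ((W θ : ℝ) : ℂ) * (g θ * (starRingEnd ℂ) (g θ)))
      (Set.Ioo 0 Real.pi) := by
    refine MeasureTheory.IntegrableOn.congr_fun (hInt.sub h1int)
      (fun θ hθ => ?_) measurableSet_Ioo
    have h := hEq hθ
    simp only [Pi.sub_apply] at h ⊢
    linear_combination h
  -- split the integral
  rw [MeasureTheory.setIntegral_congr_fun measurableSet_Ioo hEq,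
    MeasureTheory.integral_add h1int h2int, Complex.add_re]
  have partA : 0 ≤ (∫ θ in Set.Ioo (0:ℝ) Real.pi,
      -(deriv u θ) * (starRingEnd ℂ) (g θ)).re := by
    have hIoo : ∀ f : ℝ → ℂ, (∫ θ in Set.Ioo (0:ℝ) Real.pi, f θ)
        = ∫ x in (0:ℝ)..Real.pi, f x := by
      intro f
      rw [intervalIntegral.integral_of_le Real.pi_pos.le,
        MeasureTheory.integral_Ioc_eq_integral_Ioo]
    have e1 : (∫ θ in Set.Ioo (0:ℝ) Real.pi, -(deriv u θ) * (starRingEnd ℂ) (g θ))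
        = ∫ x in Set.Ioo (0:ℝ) Real.pi, u x * (starRingEnd ℂ) (deriv g x) := by
      rw [hIoo, hIoo,
        show (∫ x in (0:ℝ)..Real.pi, -(deriv u x) * (starRingEnd ℂ) (g x))
          = - ∫ x in (0:ℝ)..Real.pi, deriv u x * (starRingEnd ℂ) (g x) by
          rw [← intervalIntegral.integral_neg]; congr 1; funext x; ring,
        hibp, neg_neg]
    rw [e1]
    have hint : MeasureTheory.IntegrableOn
        (fun x : ℝ => u x * (starRingEnd ℂ) (deriv g x)) (Set.Ioo 0 Real.pi) :=
      ((((hu_cd.continuous).mul hcont_conjgd).continuousOn).integrableOn_Icc).mono_set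
        Set.Ioo_subset_Icc_self
    have hre := integral_re hint
    simp only [RCLike.re_to_complex] at hre
    rw [← hre]
    apply MeasureTheory.setIntegral_nonneg measurableSet_Ioo
    intro t ht
    have hval : u t * (starRingEnd ℂ) (deriv g t)
        = ((Dth a l t * Real.sin t * Complex.normSq (deriv g t) : ℝ) : ℂ) := by
      have : u t * (starRingEnd ℂ) (deriv g t)
          = ((Dth a l t * Real.sin t : ℝ) : ℂ)
            * (deriv g t * (starRingEnd ℂ) (deriv g t)) := by
        rw [hu_def]; ring
      rw [this, Complex.mul_conj]
      push_cast
      ring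
    rw [hval]
    simp only [Complex.ofReal_re, RCLike.re_to_complex]
    have hsin : 0 ≤ Real.sin t := Real.sin_nonneg_of_nonneg_of_le_pi ht.1.le ht.2.le
    have := Complex.normSq_nonneg (deriv g t)
    have := (hΔpos t).le
    positivity
  have partB : 0 ≤ (∫ θ in Set.Ioo (0:ℝ) Real.pi,
      ((W θ : ℝ) : ℂ) * (g θ * (starRingEnd ℂ) (g θ))).re := by
    have hre := integral_re h2int
    simp only [RCLike.re_to_complex] at hre
    rw [← hre]
    apply MeasureTheory.setIntegral_nonneg measurableSet_Ioo
    intro t ht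
    have hval : ((W t : ℝ) : ℂ) * (g t * (starRingEnd ℂ) (g t))
        = ((W t * Complex.normSq (g t) : ℝ) : ℂ) := by
      rw [Complex.mul_conj]; push_cast; ring
    rw [hval]
    simp only [Complex.ofReal_re, RCLike.re_to_complex]
    have hsin : 0 ≤ Real.sin t := Real.sin_nonneg_of_nonneg_of_le_pi ht.1.le ht.2.le
    have hWnn : 0 ≤ W t := by
      rw [hW_def]
      have := (hΔpos t)
      positivity
    exact mul_nonneg hWnn (Complex.normSq_nonneg _)
  linarith
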